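/- Assume β > 0 and let δ ∈ (0,1] satisfy (max_{1≤i≤m} γ_i/μ_i - 1)⁺ δ ≤ 1. Then for every p > 1, every x ∈ K₋, and every u ∈ Δ, ⟨b(x,u), ∇V_p(x)⟩ ≤ p (δβ + (m/2)(1+δ) - δ‖x‖₁) V_{p-1}(x), where ‖x‖₁ = ∑_i |x_i|. -/

import Mathlib

open scoped BigOperators

noncomputable section

/-- The piecewise function `ψ` from Definition 1 of the paper. -/
def psi (t : ℝ) : ℝ :=
  if t ≤ -1 then -(1/2)
  else if t ≤ 0 then (t+1)^3 - (1/2)*(t+1)^4 - 1/2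
  else t

/-- `Ψ(x) = ∑ i, ψ(x_i)/μ_i`. -/
def Psi (m : ℕ) (μ : Fin m → ℝ) (x : Fin m → ℝ) : ℝ := ∑ i, psi (x i) / μ i

/-- The Lyapunov function `V_p(x) = (δ Ψ(-x) + Ψ(x) + m / min_i μ_i)^p`. -/
def Vp (m : ℕ) (μ : Fin m → ℝ) (δ p : ℝ) (x : Fin m → ℝ) : ℝ :=
  (δ * Psi m μ (-x) + Psi m μ x + (m : ℝ) / ⨅ i, μ i) ^ p

/-- The drift `b(x,u) = -(β/m) M e - M (x - ⟨e,x⟩⁺ u) - ⟨e,x⟩⁺ Γ u`, written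
componentwise, where `M = diag(μ)` and `Γ = diag(γ)`. -/
def drift (m : ℕ) (μ γ : Fin m → ℝ) (β : ℝ) (x u : Fin m → ℝ) : Fin m → ℝ :=
  fun i => -(β / (m : ℝ)) * μ i - μ i * (x i - max (∑ j, x j) 0 * u i)
    - max (∑ j, x j) 0 * (γ i * u i)

/-!
On `K₋` the positive part `⟨e,x⟩⁺` vanishes, so `b(x,u)ᵢ = -μᵢ (β/m + xᵢ)` and the factor `1/μᵢ`
in `∂ᵢ(δΨ(-x) + Ψ(x)) = (ψ'(xᵢ) - δψ'(-xᵢ))/μᵢ` cancels: `⟨b, ∇V_p⟩ = p V_{p-1} ∑ᵢ f(xᵢ)` with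
`f(t) = -(β/m + t)(ψ'(t) - δψ'(-t))`. Using only `0 ≤ ψ' ≤ 1`, `ψ' = 1` on `[0, ∞)` and
`-tψ'(t) ≤ 1/2`, one gets `f(t) ≤ δβ/m + (1+δ)/2 - δ|t|`; summing over `i` and using `V_{p-1} ≥ 0`
(as `ψ ≥ -1/2` and `δ ≤ 1`) gives the bound.
-/

open Set

lemma HasDerivWithinAt.hasDerivAt_of_Iic_Ici {F : Type*} [NormedAddCommGroup F]
    [NormedSpace ℝ F] {f : ℝ → F} {f' : F} {a : ℝ}
    (hl : HasDerivWithinAt f f' (Iic a) a) (hr : HasDerivWithinAt f f' (Ici a) a) :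
    HasDerivAt f f' a := by
  simpa [Iic_union_Ici] using hl.union hr

def psiMid (t : ℝ) : ℝ := (t + 1) ^ 3 - (1 / 2) * (t + 1) ^ 4 - 1 / 2

def psiDeriv (t : ℝ) : ℝ :=
  if t ≤ -1 then 0
  else if t ≤ 0 then (t + 1) ^ 2 * (1 - 2 * t)
  else 1

lemma psi_eqOn_Iic : EqOn psi (fun _ => -(1 / 2)) (Iic (-1)) := fun _ ht => if_pos ht

lemma psi_eqOn_Icc : EqOn psi psiMid (Icc (-1) 0) := by
  rintro t ⟨h₁, h₂⟩
  rcases h₁.eq_or_lt with rfl | h₁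
  · norm_num [psi, psiMid]
  · simp [psi, psiMid, not_le.2 h₁, h₂]

lemma psi_eqOn_Ici : EqOn psi id (Ici 0) := by
  rintro t (ht : 0 ≤ t)
  rcases ht.eq_or_lt with rfl | ht
  · norm_num [psi]
  · simp [psi, not_le.2 ht, not_le.2 (ht.trans' (by norm_num : (-1 : ℝ) < 0))]

lemma hasDerivAt_psiMid (t : ℝ) : HasDerivAt psiMid ((t + 1) ^ 2 * (1 - 2 * t)) t := by
  have h : HasDerivAt (fun t : ℝ => t + 1) 1 t := (hasDerivAt_id t).add_const 1
  refine (((h.fun_pow 3).sub ((h.fun_pow 4).const_mul (1 / 2))).sub_const (1 / 2)).congr_deriv ?_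
  push_cast
  ring

lemma hasDerivAt_psi (t : ℝ) : HasDerivAt psi (psiDeriv t) t := by
  have hc := hasDerivAt_const t (-(1 / 2) : ℝ)
  have hp := hasDerivAt_psiMid t
  have hi := hasDerivAt_id t
  rcases lt_trichotomy t (-1) with ht | rfl | ht
  · rw [show psiDeriv t = 0 from if_pos ht.le]
    exact hc.congr_of_eventuallyEq (psi_eqOn_Iic.eventuallyEq_of_mem (Iic_mem_nhds ht))
  · have hp0 := (hasDerivAt_psiMid (-1)).congr_deriv (by norm_num : _ = (0 : ℝ))
    rw [show psiDeriv (-1) = 0 from if_pos le_rfl]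
    exact HasDerivWithinAt.hasDerivAt_of_Iic_Ici
      (hc.hasDerivWithinAt.congr psi_eqOn_Iic (psi_eqOn_Iic self_mem_Iic))
      (hp0.hasDerivWithinAt.congr_of_eventuallyEq
        (psi_eqOn_Icc.eventuallyEq_of_mem (Icc_mem_nhdsGE (by norm_num)))
        (psi_eqOn_Icc (by norm_num)))
  rcases lt_trichotomy t 0 with ht₀ | rfl | ht₀
  · rw [show psiDeriv t = _ from (if_neg (not_le.2 ht)).trans (if_pos ht₀.le)]
    exact hp.congr_of_eventuallyEq (psi_eqOn_Icc.eventuallyEq_of_mem (Icc_mem_nhds ht ht₀))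
  · have hp1 := (hasDerivAt_psiMid 0).congr_deriv (by norm_num : _ = (1 : ℝ))
    rw [show psiDeriv 0 = 1 by norm_num [psiDeriv]]
    exact HasDerivWithinAt.hasDerivAt_of_Iic_Ici
      (hp1.hasDerivWithinAt.congr_of_eventuallyEq
        (psi_eqOn_Icc.eventuallyEq_of_mem (Icc_mem_nhdsLE (by norm_num)))
        (psi_eqOn_Icc (by norm_num)))
      (hi.hasDerivWithinAt.congr psi_eqOn_Ici (psi_eqOn_Ici self_mem_Ici))
  · rw [show psiDeriv t = 1 by simp [psiDeriv, not_le.2 ht, not_le.2 ht₀]]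
    exact hi.congr_of_eventuallyEq (psi_eqOn_Ici.eventuallyEq_of_mem (Ici_mem_nhds ht₀))

lemma psiDeriv_of_nonneg {t : ℝ} (ht : 0 ≤ t) : psiDeriv t = 1 := by
  rcases ht.eq_or_lt with rfl | ht
  · norm_num [psiDeriv]
  · simp [psiDeriv, not_le.2 ht, not_le.2 (ht.trans' (by norm_num : (-1 : ℝ) < 0))]

lemma psiDeriv_nonneg (t : ℝ) : 0 ≤ psiDeriv t := by
  unfold psiDeriv
  split_ifs with h₁ h₂
  · rfl
  · exact mul_nonneg (sq_nonneg _) (by linarith)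
  · exact zero_le_one

lemma psiDeriv_le_one (t : ℝ) : psiDeriv t ≤ 1 := by
  unfold psiDeriv
  split_ifs with h₁ h₂
  · exact zero_le_one
  · nlinarith [mul_nonneg (sq_nonneg t) (by linarith : (0 : ℝ) ≤ 3 + 2 * t)]
  · rfl

lemma neg_mul_psiDeriv_le_half (t : ℝ) : -t * psiDeriv t ≤ 1 / 2 := by
  unfold psiDeriv
  split_ifs with h₁ h₂
  · norm_num
  · nlinarith [mul_nonneg (mul_nonneg (by linarith : (0 : ℝ) ≤ t + 1) (by linarith : 0 ≤ -t))
      (sq_nonneg (t + 1 / 2)), sq_nonneg (t + 1 / 2)]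
  · linarith

lemma neg_add_mul_psiDeriv_sub_le {δ a : ℝ} (hδ₀ : 0 ≤ δ) (hδ₁ : δ ≤ 1) (ha : 0 ≤ a) (t : ℝ) :
    -(a + t) * (psiDeriv t - δ * psiDeriv (-t)) ≤ δ * a + (1 + δ) / 2 - δ * |t| := by
  have h_const : -a * (psiDeriv t - δ * psiDeriv (-t)) ≤ δ * a := by
    nlinarith [mul_nonneg ha (psiDeriv_nonneg t),
      mul_nonneg (mul_nonneg ha hδ₀) (sub_nonneg.2 (psiDeriv_le_one (-t)))]
  have h_linear : -t * (psiDeriv t - δ * psiDeriv (-t)) ≤ (1 + δ) / 2 - δ * |t| := by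
    rcases le_or_gt 0 t with ht | ht
    · rw [abs_of_nonneg ht, psiDeriv_of_nonneg ht]
      have := mul_le_mul_of_nonneg_left (neg_mul_psiDeriv_le_half (-t)) hδ₀
      nlinarith [mul_nonneg (sub_nonneg.2 hδ₁) ht]
    · rw [abs_of_neg ht, psiDeriv_of_nonneg (neg_nonneg.2 ht.le)]
      nlinarith [neg_mul_psiDeriv_le_half t]
  linarith

lemma hasFDerivAt_Psi (m : ℕ) (μ x : Fin m → ℝ) :
    HasFDerivAt (Psi m μ)
      (∑ i, (psiDeriv (x i) / μ i) • (ContinuousLinearMap.proj i : (Fin m → ℝ) →L[ℝ] ℝ)) x :=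
  HasFDerivAt.fun_sum fun i _ => by
    exact ((hasDerivAt_psi (x i)).div_const (μ i)).comp_hasFDerivAt x
      (ContinuousLinearMap.proj i : (Fin m → ℝ) →L[ℝ] ℝ).hasFDerivAt

def VpBase (m : ℕ) (μ : Fin m → ℝ) (δ : ℝ) (x : Fin m → ℝ) : ℝ :=
  δ * Psi m μ (-x) + Psi m μ x + (m : ℝ) / ⨅ i, μ i

lemma fderiv_Vp_apply (m : ℕ) (μ : Fin m → ℝ) (δ : ℝ) {p : ℝ} (hp : 1 ≤ p) (x v : Fin m → ℝ) :
    fderiv ℝ (Vp m μ δ p) x v = p * VpBase m μ δ x ^ (p - 1) *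
      ∑ i, (psiDeriv (x i) - δ * psiDeriv (-x i)) / μ i * v i := by
  have hbase : HasFDerivAt (VpBase m μ δ) _ x :=
    ((((hasFDerivAt_Psi m μ (-x)).comp x (hasFDerivAt_id x).neg).const_mul δ).add
      (hasFDerivAt_Psi m μ x)).add_const _
  have hV : HasFDerivAt (Vp m μ δ p) _ x :=
    (Real.hasDerivAt_rpow_const (Or.inr hp)).comp_hasFDerivAt x hbase
  rw [hV.fderiv]
  simp only [Pi.neg_apply, ContinuousLinearMap.comp_neg, ContinuousLinearMap.comp_id, smul_neg,
    smul_add, add_apply, neg_apply, smul_apply, sum_apply, ContinuousLinearMap.proj_apply,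
    smul_eq_mul, Finset.mul_sum]
  rw [← Finset.sum_neg_distrib, ← Finset.sum_add_distrib]
  exact Finset.sum_congr rfl fun i _ => by unfold VpBase; ring

lemma neg_half_le_psi (t : ℝ) : -(1 / 2) ≤ psi t := by
  unfold psi
  split_ifs with h₁ h₂
  · rfl
  · nlinarith [mul_nonneg (pow_nonneg (by linarith : (0 : ℝ) ≤ t + 1) 3)
      (by linarith : (0 : ℝ) ≤ 1 - t)]
  · linarith

lemma VpBase_nonneg {m : ℕ} {μ : Fin m → ℝ} (hμ : ∀ i, 0 < μ i) {δ : ℝ} (hδ₀ : 0 ≤ δ)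
    (hδ₁ : δ ≤ 1) (x : Fin m → ℝ) : 0 ≤ VpBase m μ δ x := by
  rcases Nat.eq_zero_or_pos m with rfl | hm
  · simp [VpBase, Psi]
  have : Nonempty (Fin m) := ⟨⟨0, hm⟩⟩
  have hc : 0 < ⨅ i, μ i := by
    obtain ⟨i, hi⟩ := exists_eq_ciInf_of_finite (f := μ)
    exact hi ▸ hμ i
  have hterm : ∀ i, -(1 / ⨅ i, μ i) ≤ (δ * psi (-x i) + psi (x i)) / μ i := fun i =>
    calc -(1 / ⨅ i, μ i) ≤ -1 / μ i := by
          rw [neg_div]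
          exact neg_le_neg (one_div_le_one_div_of_le hc (ciInf_le (Finite.bddBelow_range μ) i))
      _ ≤ _ := div_le_div_of_nonneg_right
          (by nlinarith [neg_half_le_psi (x i), neg_half_le_psi (-x i)]) (hμ i).le
  have hsum : VpBase m μ δ x = ∑ i, (δ * psi (-x i) + psi (x i)) / μ i + m / ⨅ i, μ i := by
    simp [VpBase, Psi, Finset.mul_sum, ← Finset.sum_add_distrib, add_div, mul_div_assoc]
  have := Finset.sum_le_sum fun i (_ : i ∈ Finset.univ) => hterm i
  simp only [Finset.sum_const, Finset.card_univ, Fintype.card_fin, nsmul_eq_mul] at this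
  rw [hsum, div_eq_mul_one_div]
  linarith

lemma drift_of_sum_nonpos {m : ℕ} (μ γ : Fin m → ℝ) (β : ℝ) {x : Fin m → ℝ}
    (hx : ∑ i, x i ≤ 0) (u : Fin m → ℝ) (i : Fin m) :
    drift m μ γ β x u i = -μ i * (β / m + x i) := by
  simp only [drift, max_eq_right hx]
  ring

lemma sum_psiDeriv_mul_drift_le {m : ℕ} (hm : 0 < m) {μ : Fin m → ℝ} (hμ : ∀ i, 0 < μ i)
    (γ : Fin m → ℝ) {β : ℝ} (hβ : 0 ≤ β) {δ : ℝ} (hδ₀ : 0 ≤ δ) (hδ₁ : δ ≤ 1)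
    {x : Fin m → ℝ} (hx : ∑ i, x i ≤ 0) (u : Fin m → ℝ) :
    ∑ i, (psiDeriv (x i) - δ * psiDeriv (-x i)) / μ i * drift m μ γ β x u i ≤
      δ * β + m / 2 * (1 + δ) - δ * ∑ i, |x i| :=
  calc _ = ∑ i, -(β / m + x i) * (psiDeriv (x i) - δ * psiDeriv (-x i)) := by
        refine Finset.sum_congr rfl fun i _ => ?_
        rw [drift_of_sum_nonpos μ γ β hx u i]
        field_simp [(hμ i).ne']
    _ ≤ ∑ i : Fin m, (δ * (β / m) + (1 + δ) / 2 - δ * |x i|) :=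
        Finset.sum_le_sum fun i _ => neg_add_mul_psiDeriv_sub_le hδ₀ hδ₁ (by positivity) (x i)
    _ = _ := by
        simp only [Finset.sum_sub_distrib, Finset.sum_const, Finset.card_univ, Fintype.card_fin,
          nsmul_eq_mul, Finset.mul_sum]
        field_simp

theorem stmt_5_general (m : ℕ) (hm : 1 ≤ m) (μ γ : Fin m → ℝ)
    (hμ : ∀ i, 0 < μ i)
    (β : ℝ) (hβ : 0 < β)
    (δ : ℝ) (hδ0 : 0 < δ) (hδ1 : δ ≤ 1)
    (p : ℝ) (hp : 1 < p)
    (x : Fin m → ℝ) (hx : ∑ i, x i ≤ 0)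
    (u : Fin m → ℝ) :
    fderiv ℝ (Vp m μ δ p) x (drift m μ γ β x u) ≤
      p * (δ * β + (m : ℝ) / 2 * (1 + δ) - δ * ∑ i, |x i|) * Vp m μ δ (p - 1) x := by
  have hV : 0 ≤ p * VpBase m μ δ x ^ (p - 1) :=
    mul_nonneg (by linarith) (Real.rpow_nonneg (VpBase_nonneg hμ hδ0.le hδ1 x) _)
  rw [fderiv_Vp_apply m μ δ hp.le]
  calc _ ≤ p * VpBase m μ δ x ^ (p - 1) * (δ * β + m / 2 * (1 + δ) - δ * ∑ i, |x i|) :=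
        mul_le_mul_of_nonneg_left
          (sum_psiDeriv_mul_drift_le hm hμ γ hβ.le hδ0.le hδ1 hx u) hV
    _ = _ := by
        rw [show Vp m μ δ (p - 1) x = VpBase m μ δ x ^ (p - 1) from rfl]
        ring

/-- Lemma 1, inequality on `K₋`: for `β > 0`, admissible `δ`, `p > 1`, `x ∈ K₋`,
`u ∈ Δ`: `⟨b(x,u), ∇V_p(x)⟩ ≤ p (δβ + (m/2)(1+δ) - δ‖x‖₁) V_{p-1}(x)`. -/
theorem stmt_5 (m : ℕ) (hm : 1 ≤ m) (μ γ : Fin m → ℝ)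
    (hμ : ∀ i, 0 < μ i) (hγ : ∀ i, 0 ≤ γ i)
    (β : ℝ) (hβ : 0 < β)
    (δ : ℝ) (hδ0 : 0 < δ) (hδ1 : δ ≤ 1)
    (hδγ : max ((⨆ i, γ i / μ i) - 1) 0 * δ ≤ 1)
    (p : ℝ) (hp : 1 < p)
    (x : Fin m → ℝ) (hx : ∑ i, x i ≤ 0)
    (u : Fin m → ℝ) (hu0 : ∀ i, 0 ≤ u i) (hu1 : ∑ i, u i = 1) :
    fderiv ℝ (Vp m μ δ p) x (drift m μ γ β x u) ≤
      p * (δ * β + (m : ℝ) / 2 * (1 + δ) - δ * ∑ i, |x i|) * Vp m μ δ (p - 1) x :=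
  stmt_5_general m hm μ γ hμ β hβ δ hδ0 hδ1 p hp x hx u
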